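/- Let x, y, z ∈ ℂ, set μ = x² + y² + z² - xyz and ν = cosh⁻¹(1 - μ/2), and suppose x² ≠ μ and y² ≠ μ. Then (xy - (μ/2)z)² = (x² - μ)(y² - μ) + ((sinh ν)·z)². In particular xy + (e^ν - 1)z ≠ 0. -/
import Mathlib


/-- The principal square root of a complex number (nonnegative real part). -/
noncomputable def csqrt (z : ℂ) : ℂ := z ^ ((1 : ℂ) / 2)

/-- The principal inverse hyperbolic cosine, with nonnegative real part
and imaginary part in (-π, π]. -/
noncomputable def carccosh (z : ℂ) : ℂ :=
  Complex.log (z + csqrt (z - 1) * csqrt (z + 1))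

lemma csqrt_sq (a : ℂ) : csqrt a ^ 2 = a := by
  unfold csqrt
  by_cases ha : a = 0
  · simp [ha, Complex.zero_cpow (by norm_num : (1:ℂ)/2 ≠ 0)]
  · rw [sq, ← Complex.cpow_add _ _ ha]
    norm_num

lemma carccosh_exp_ne (w : ℂ) : w + csqrt (w - 1) * csqrt (w + 1) ≠ 0 := by
  intro h
  have hs : (csqrt (w - 1) * csqrt (w + 1)) ^ 2 = w ^ 2 - 1 := by
    rw [mul_pow, csqrt_sq, csqrt_sq]; ring
  have h2 : csqrt (w - 1) * csqrt (w + 1) = -w := by linear_combination h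
  rw [h2] at hs
  have : (0:ℂ) = -1 := by linear_combination hs
  norm_num at this

lemma cosh_carccosh (w : ℂ) : Complex.cosh (carccosh w) = w := by
  have hu := carccosh_exp_ne w
  have hs : (csqrt (w - 1) * csqrt (w + 1)) ^ 2 = w ^ 2 - 1 := by
    rw [mul_pow, csqrt_sq, csqrt_sq]; ring
  rw [carccosh, Complex.cosh, Complex.exp_neg, Complex.exp_log hu]
  field_simp
  linear_combination hs

theorem psi_numerator_identity (x y z μ ν : ℂ)
    (hμ : μ = x ^ 2 + y ^ 2 + z ^ 2 - x * y * z)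
    (hν : ν = carccosh (1 - μ / 2))
    (hx : x ^ 2 ≠ μ) (hy : y ^ 2 ≠ μ) :
    (x * y - (μ / 2) * z) ^ 2 =
      (x ^ 2 - μ) * (y ^ 2 - μ) + (Complex.sinh ν * z) ^ 2 ∧
    x * y + (Complex.exp ν - 1) * z ≠ 0 := by
  have hcosh : Complex.cosh ν = 1 - μ / 2 := by rw [hν, cosh_carccosh]
  have hs2 : Complex.sinh ν ^ 2 = μ ^ 2 / 4 - μ := by
    have := Complex.cosh_sq_sub_sinh_sq ν
    rw [hcosh] at this
    linear_combination -this
  have hid : (x * y - (μ / 2) * z) ^ 2 =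
      (x ^ 2 - μ) * (y ^ 2 - μ) + (Complex.sinh ν * z) ^ 2 := by
    linear_combination -z ^ 2 * hs2 - μ * hμ
  refine ⟨hid, ?_⟩
  intro h
  have hexp : Complex.exp ν = Complex.cosh ν + Complex.sinh ν :=
    (Complex.cosh_add_sinh ν).symm
  have hA : x * y - (μ / 2) * z = -(Complex.sinh ν * z) := by
    rw [hexp, hcosh] at h; linear_combination h
  have : (x ^ 2 - μ) * (y ^ 2 - μ) = 0 := by
    have := hid
    rw [hA] at this
    linear_combination -this
  rcases mul_eq_zero.mp this with h' | h'
  · exact hx (by linear_combination h')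
  · exact hy (by linear_combination h')
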